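/- The pair (s, E) forms a regular sequence on 𝓡 = ℂ[s,A,B,C,D,E]/I_{sE}: the image of s is not a zero divisor in 𝓡, and the image of E is not a zero divisor in 𝓡/(s). -/

import Mathlib

/-!
Both claims follow from one criterion: `x` is a nonzerodivisor modulo `(f₁, …, fₖ)` as soon as
it is one in the ring and every syzygy of the `fᵢ` modulo `x` is congruent modulo `x` to a
syzygy of the `fᵢ`.

For `x = E`, the generators `n₁, n₂, n₃, s` of `I_{sE} + (s)` reduce modulo `E` to `E`-free
polynomials, and the lift of a syzygy only needs a correction in the coefficient of `s`.

For `x = s`, the reductions `m₁, m₂, m₃` are the minors of `[[A², B, D], [C, A², B² − D]]`, whose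
syzygies are generated by the two rows of that matrix (Hilbert–Burch); these lift to the rows
of the matrix defining `I_{sE}`. The Hilbert–Burch claim is proved by induction on the degree
in `C`: at `C = 0` a syzygy of `A⁴, A²(B² − D), m₃` is read off from divisibility by the prime
`A`, and what remains is `C` times a syzygy of smaller `C`-degree.
-/

open MvPolynomial

/-- Variables: `s = X 0`, `A = X 1`, `B = X 2`, `C = X 3`, `D = X 4`, `E = X 5`. -/
noncomputable def n₁ : MvPolynomial (Fin 6) ℂ :=
  ((X 1) ^ 2 + (X 0) ^ 5 * (X 5) ^ 5) * (X 1) ^ 2 - X 2 * X 3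

noncomputable def n₂ : MvPolynomial (Fin 6) ℂ :=
  ((X 1) ^ 2 + (X 0) ^ 5 * (X 5) ^ 5) * ((X 2) ^ 2 - X 4) - X 3 * X 4

noncomputable def n₃ : MvPolynomial (Fin 6) ℂ :=
  X 2 * ((X 2) ^ 2 - X 4) - (X 1) ^ 2 * X 4

/-- The ideal generated by the three 2×2 minors of
`[[A² + s⁵E⁵, B, D], [C, A², B² − D]]`. -/
noncomputable def I_sE : Ideal (MvPolynomial (Fin 6) ℂ) :=
  Ideal.span {n₁, n₂, n₃}

namespace MvPolynomial

variable {σ R : Type*} [CommRing R] [DecidableEq σ]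

noncomputable def killX (i : σ) : MvPolynomial σ R →ₐ[R] MvPolynomial σ R :=
  aeval (Function.update X i 0)

@[simp]
theorem killX_X_self (i : σ) : killX i (X i : MvPolynomial σ R) = 0 := by
  simp [killX]

@[simp]
theorem killX_X_of_ne {i j : σ} (h : j ≠ i) : killX i (X j : MvPolynomial σ R) = X j := by
  simp [killX, h]

theorem killX_killX (i : σ) (f : MvPolynomial σ R) : killX i (killX i f) = killX i f := by
  rw [← AlgHom.comp_apply]
  congr 1
  refine algHom_ext fun j => ?_
  by_cases h : j = i <;> simp [h]

theorem X_dvd_sub_killX (i : σ) (f : MvPolynomial σ R) : X i ∣ f - killX i f := by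
  induction f using MvPolynomial.induction_on with
  | C a => simp [killX]
  | add p q hp hq => simpa only [map_add, add_sub_add_comm] using dvd_add hp hq
  | mul_X p j hp =>
    by_cases h : j = i
    · subst h
      simp
    · rw [map_mul, killX_X_of_ne h, ← sub_mul]
      exact hp.mul_right _

theorem killX_eq_zero_of_X_dvd {i : σ} {f : MvPolynomial σ R} (h : X i ∣ f) : killX i f = 0 := by
  obtain ⟨g, rfl⟩ := h
  simp

theorem degreeOf_killX (i : σ) (f : MvPolynomial σ R) : degreeOf i (killX i f) = 0 := by
  by_contra h
  rw [← ne_eq, ← mem_vars_iff_degreeOf_ne_zero, killX, aeval_eq_bind₁] at h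
  obtain ⟨j, -, hj⟩ := Finset.mem_biUnion.mp (vars_bind₁ _ f h)
  by_cases hji : j = i
  · simp [hji] at hj
  · simp only [Function.update_of_ne hji] at hj
    exact mem_vars_iff_degreeOf_ne_zero.mp hj (degreeOf_X_of_ne (Ne.symm hji))

theorem eq_zero_or_degreeOf_lt_of_eq_add_X_mul {i : σ} {n : ℕ} {f g h : MvPolynomial σ R}
    (hg : killX i g = g) (hf : f = g + X i * h) (hn : f = 0 ∨ degreeOf i f < n + 1) :
    h = 0 ∨ degreeOf i h < n := by
  refine or_iff_not_imp_left.mpr fun h0 => ?_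
  have hdeg := (degreeOf_mul_X_eq_degreeOf_add_one_iff i h).mpr h0
  rw [show h * X i = f - g by rw [hf]; ring] at hdeg
  have hsub := degreeOf_sub_le i f g
  have hg0 : degreeOf i g = 0 := hg ▸ degreeOf_killX i g
  rcases hn with rfl | hn
  · rw [degreeOf_zero] at hsub
    omega
  · omega

end MvPolynomial

open scoped nonZeroDivisors

theorem Ideal.Quotient.mk_mem_nonZeroDivisors_of_lift_syzygies {R ι : Type*} [CommRing R]
    [Fintype ι] {x : R} (hx : x ∈ R⁰) {f : ι → R}
    (hlift : ∀ a : ι → R, x ∣ ∑ k, a k * f k →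
      ∃ b : ι → R, ∑ k, b k * f k = 0 ∧ ∀ k, x ∣ a k - b k) :
    Ideal.Quotient.mk (Ideal.span (Set.range f)) x ∈ (R ⧸ Ideal.span (Set.range f))⁰ := by
  refine mem_nonZeroDivisors_iff_right.mpr fun z hz => ?_
  obtain ⟨g, rfl⟩ := Ideal.Quotient.mk_surjective z
  rw [← map_mul, Ideal.Quotient.eq_zero_iff_mem, Ideal.mem_span_range_iff_exists_fun] at hz
  obtain ⟨a, ha⟩ := hz
  obtain ⟨b, hb, hab⟩ := hlift a ⟨g, by rw [ha, mul_comm]⟩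
  choose q hq using hab
  have hgx : g * x = (∑ k, q k * f k) * x := by
    have hab : ∀ k, a k * f k = b k * f k + q k * f k * x := fun k => by
      linear_combination f k * hq k
    simp only [← ha, hab, Finset.sum_add_distrib, hb, zero_add, Finset.sum_mul]
  rw [Ideal.Quotient.eq_zero_iff_mem, (mul_cancel_right_mem_nonZeroDivisors hx).mp hgx]
  exact Ideal.mem_span_range_iff_exists_fun.mpr ⟨q, rfl⟩

section Syzygies

variable {R : Type*} [CommRing R] [IsDomain R]

-- The minors of `[[A², B, D], [C, A², B² − D]]`, i.e. `n₁, n₂, n₃` at `s = 0`.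
noncomputable def m₁ : MvPolynomial (Fin 6) R := X 1 ^ 4 - X 2 * X 3

noncomputable def m₂ : MvPolynomial (Fin 6) R := X 1 ^ 2 * (X 2 ^ 2 - X 4) - X 3 * X 4

noncomputable def m₃ : MvPolynomial (Fin 6) R := X 2 * (X 2 ^ 2 - X 4) - X 1 ^ 2 * X 4

theorem X_two_sq_sub_X_four_ne_zero : (X 2 ^ 2 - X 4 : MvPolynomial (Fin 6) R) ≠ 0 := fun h =>
  X_ne_zero (R := R) 4 (by simpa using congrArg (killX 2) h)

theorem not_X_one_dvd_X_two_sq_sub_X_four : ¬ (X 1 : MvPolynomial (Fin 6) R) ∣ X 2 ^ 2 - X 4 :=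
  fun h => X_two_sq_sub_X_four_ne_zero (by simpa using killX_eq_zero_of_X_dvd h)

theorem not_X_one_dvd_m₃ : ¬ (X 1 : MvPolynomial (Fin 6) R) ∣ m₃ := fun h => by
  simpa [m₃, X_ne_zero, X_two_sq_sub_X_four_ne_zero] using killX_eq_zero_of_X_dvd h

theorem m₃_ne_zero : (m₃ : MvPolynomial (Fin 6) R) ≠ 0 := fun h =>
  not_X_one_dvd_m₃ (h ▸ dvd_zero _)

theorem exists_of_syzygy_X_three_eq_zero {a b c : MvPolynomial (Fin 6) R}
    (h : a * X 1 ^ 4 + b * (X 1 ^ 2 * (X 2 ^ 2 - X 4)) + c * m₃ = 0) :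
    ∃ w v, a = w * X 4 + v * (X 2 ^ 2 - X 4) ∧ b = -(w * X 2) - v * X 1 ^ 2 ∧
      c = w * X 1 ^ 2 := by
  have hA : Prime (X 1 : MvPolynomial (Fin 6) R) := X_prime
  have hA2 : (X 1 : MvPolynomial (Fin 6) R) ^ 2 ≠ 0 := pow_ne_zero _ (X_ne_zero _)
  obtain ⟨w, rfl⟩ : X 1 ^ 2 ∣ c := hA.pow_dvd_of_dvd_mul_right 2 not_X_one_dvd_m₃
    ⟨-(a * X 1 ^ 2 + b * (X 2 ^ 2 - X 4)), by linear_combination h⟩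
  have h₁ : X 1 ^ 2 * (a - w * X 4) + (b + w * X 2) * (X 2 ^ 2 - X 4) = 0 := by
    refine (mul_eq_zero.mp ?_).resolve_left hA2
    simp only [m₃] at h
    linear_combination h
  obtain ⟨v, hv⟩ : X 1 ^ 2 ∣ b + w * X 2 :=
    hA.pow_dvd_of_dvd_mul_right 2 not_X_one_dvd_X_two_sq_sub_X_four
      ⟨-(a - w * X 4), by linear_combination h₁⟩
  have h₂ : (a - w * X 4) + v * (X 2 ^ 2 - X 4) = 0 := by
    refine (mul_eq_zero.mp ?_).resolve_left hA2
    linear_combination h₁ - (X 2 ^ 2 - X 4) * hv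
  exact ⟨w, -v, by linear_combination h₂, by linear_combination hv, by ring⟩

theorem exists_syzygy_descent {a b c : MvPolynomial (Fin 6) R}
    (h : a * m₁ + b * m₂ + c * m₃ = 0) :
    ∃ w v a' b' c', killX 3 w = w ∧ killX 3 v = v ∧
      a = w * X 4 + v * (X 2 ^ 2 - X 4) + X 3 * a' ∧
      b = -(w * X 2) - v * X 1 ^ 2 + X 3 * b' ∧
      c = w * X 1 ^ 2 + v * X 3 + X 3 * c' ∧
      a' * m₁ + b' * m₂ + c' * m₃ = 0 := by
  have h₀ : killX 3 a * X 1 ^ 4 + killX 3 b * (X 1 ^ 2 * (X 2 ^ 2 - X 4))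
      + killX 3 c * m₃ = 0 := by
    simpa [m₁, m₂, m₃] using congrArg (killX 3) h
  obtain ⟨w, v, ha, hb, hc⟩ := exists_of_syzygy_X_three_eq_zero h₀
  obtain ⟨a', ha'⟩ := X_dvd_sub_killX 3 a
  obtain ⟨b', hb'⟩ := X_dvd_sub_killX 3 b
  obtain ⟨c', hc'⟩ := X_dvd_sub_killX 3 c
  apply_fun killX 3 at ha hb hc
  simp only [killX_killX, map_add, map_sub, map_neg, map_mul, map_pow, ne_eq, Fin.reduceEq,
    not_false_eq_true, killX_X_of_ne] at ha hb hc
  refine ⟨killX 3 w, killX 3 v, a', b', c' - killX 3 v, killX_killX _ _, killX_killX _ _,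
    by linear_combination ha' + ha, by linear_combination hb' + hb,
    by linear_combination hc' + hc, ?_⟩
  refine (mul_eq_zero.mp ?_).resolve_left (X_ne_zero (R := R) 3)
  simp only [m₁, m₂, m₃] at h ⊢
  linear_combination h - (X 1 ^ 4 - X 2 * X 3) * (ha' + ha)
    - (X 1 ^ 2 * (X 2 ^ 2 - X 4) - X 3 * X 4) * (hb' + hb)
    - (X 2 * (X 2 ^ 2 - X 4) - X 1 ^ 2 * X 4) * (hc' + hc)

theorem exists_of_syzygy_of_degreeOf_lt (n : ℕ) {a b c : MvPolynomial (Fin 6) R}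
    (ha : a = 0 ∨ degreeOf 3 a < n) (hb : b = 0 ∨ degreeOf 3 b < n)
    (h : a * m₁ + b * m₂ + c * m₃ = 0) :
    ∃ w v, a = w * X 4 + v * (X 2 ^ 2 - X 4) ∧ b = -(w * X 2) - v * X 1 ^ 2 ∧
      c = w * X 1 ^ 2 + v * X 3 := by
  -- `degreeOf 3 0 = 0`, so the measure only decreases if `0` is treated separately.
  induction n generalizing a b c with
  | zero =>
    simp only [Nat.not_lt_zero, or_false] at ha hb
    subst ha hb
    obtain rfl : c = 0 := by simpa [m₃_ne_zero] using h
    exact ⟨0, 0, by ring, by ring, by ring⟩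
  | succ n ih =>
    obtain ⟨w, v, a', b', c', hw, hv, rfl, rfl, rfl, h'⟩ := exists_syzygy_descent h
    obtain ⟨w', v', ha', hb', hc'⟩ := ih
      (eq_zero_or_degreeOf_lt_of_eq_add_X_mul (by simp [hw, hv]) rfl ha)
      (eq_zero_or_degreeOf_lt_of_eq_add_X_mul (by simp [hw, hv]) rfl hb) h'
    exact ⟨w + X 3 * w', v + X 3 * v', by linear_combination X 3 * ha',
      by linear_combination X 3 * hb', by linear_combination X 3 * hc'⟩

theorem exists_of_syzygy {a b c : MvPolynomial (Fin 6) R}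
    (h : a * m₁ + b * m₂ + c * m₃ = 0) :
    ∃ w v, a = w * X 4 + v * (X 2 ^ 2 - X 4) ∧ b = -(w * X 2) - v * X 1 ^ 2 ∧
      c = w * X 1 ^ 2 + v * X 3 :=
  exists_of_syzygy_of_degreeOf_lt (max (degreeOf 3 a) (degreeOf 3 b) + 1)
    (.inr (Nat.lt_succ_of_le (le_max_left _ _))) (.inr (Nat.lt_succ_of_le (le_max_right _ _))) h

end Syzygies

theorem killX_zero_n₁ : killX 0 n₁ = m₁ := by simp [n₁, m₁]; ring

theorem killX_zero_n₂ : killX 0 n₂ = m₂ := by simp [n₂, m₂]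

theorem killX_zero_n₃ : killX 0 n₃ = m₃ := by simp [n₃, m₃]

theorem killX_five_n₁ : killX 5 n₁ = m₁ := by simp [n₁, m₁]; ring

theorem killX_five_n₂ : killX 5 n₂ = m₂ := by simp [n₂, m₂]

theorem killX_five_n₃ : killX 5 n₃ = m₃ := by simp [n₃, m₃]

theorem I_sE_eq_span_range : I_sE = Ideal.span (Set.range ![n₁, n₂, n₃]) := by
  simp only [I_sE, Matrix.range_cons, Matrix.range_empty, Set.union_empty, Set.singleton_union]

theorem I_sE_sup_span_X_zero_eq_span_range :
    I_sE ⊔ Ideal.span {X 0} = Ideal.span (Set.range ![n₁, n₂, n₃, X 0]) := by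
  simp only [I_sE, ← Ideal.span_union, Matrix.range_cons, Matrix.range_empty, Set.union_empty,
    Set.singleton_union, Set.insert_union]

theorem X_zero_mem_nonZeroDivisors_quotient_I_sE :
    Ideal.Quotient.mk I_sE (X 0) ∈ (MvPolynomial (Fin 6) ℂ ⧸ I_sE)⁰ := by
  rw [I_sE_eq_span_range]
  refine Ideal.Quotient.mk_mem_nonZeroDivisors_of_lift_syzygies
    (mem_nonZeroDivisors_of_ne_zero (X_ne_zero 0)) fun a ha => ?_
  rw [Fin.sum_univ_three] at ha
  have h₀ : killX 0 (a 0) * m₁ + killX 0 (a 1) * m₂ + killX 0 (a 2) * m₃ = 0 := by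
    simpa [killX_zero_n₁, killX_zero_n₂, killX_zero_n₃] using killX_eq_zero_of_X_dvd ha
  obtain ⟨w, v, h₁, h₂, h₃⟩ := exists_of_syzygy h₀
  refine ⟨![w * X 4 + v * (X 2 ^ 2 - X 4), -(w * X 2) - v * X 1 ^ 2,
    w * (X 1 ^ 2 + X 0 ^ 5 * X 5 ^ 5) + v * X 3], ?_, ?_⟩
  · simp only [Fin.sum_univ_three, n₁, n₂, n₃]
    simp only [Fin.isValue, Matrix.cons_val]
    ring
  · choose t ht using fun k => X_dvd_sub_killX 0 (a k)
    intro k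
    fin_cases k <;>
      simp only [Fin.zero_eta, Fin.mk_one, Fin.reduceFinMk, Fin.isValue, Matrix.cons_val]
    · exact ⟨t 0, by linear_combination ht 0 + h₁⟩
    · exact ⟨t 1, by linear_combination ht 1 + h₂⟩
    · exact ⟨t 2 - w * X 0 ^ 4 * X 5 ^ 5, by linear_combination ht 2 + h₃⟩

theorem X_five_mem_nonZeroDivisors_quotient_I_sE_sup :
    Ideal.Quotient.mk (I_sE ⊔ Ideal.span {X 0}) (X 5) ∈
      (MvPolynomial (Fin 6) ℂ ⧸ (I_sE ⊔ Ideal.span {X 0}))⁰ := by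
  rw [I_sE_sup_span_X_zero_eq_span_range]
  refine Ideal.Quotient.mk_mem_nonZeroDivisors_of_lift_syzygies
    (mem_nonZeroDivisors_of_ne_zero (X_ne_zero 5)) fun a ha => ?_
  rw [Fin.sum_univ_four] at ha
  have h₀ : killX 5 (a 0) * m₁ + killX 5 (a 1) * m₂ + killX 5 (a 2) * m₃
      + killX 5 (a 3) * X 0 = 0 := by
    simpa [killX_five_n₁, killX_five_n₂, killX_five_n₃] using killX_eq_zero_of_X_dvd ha
  refine ⟨![killX 5 (a 0), killX 5 (a 1), killX 5 (a 2),
    killX 5 (a 3) - X 0 ^ 4 * X 5 ^ 5 *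
      (killX 5 (a 0) * X 1 ^ 2 + killX 5 (a 1) * (X 2 ^ 2 - X 4))],
    ?_, ?_⟩
  · simp only [Fin.sum_univ_four, n₁, n₂, n₃]
    simp only [m₁, m₂, m₃] at h₀
    simp only [Fin.isValue, Matrix.cons_val]
    linear_combination h₀
  · choose t ht using fun k => X_dvd_sub_killX 5 (a k)
    intro k
    fin_cases k <;>
      simp only [Fin.zero_eta, Fin.mk_one, Fin.reduceFinMk, Fin.isValue, Matrix.cons_val]
    · exact ⟨t 0, by linear_combination ht 0⟩
    · exact ⟨t 1, by linear_combination ht 1⟩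
    · exact ⟨t 2, by linear_combination ht 2⟩
    · exact ⟨t 3 + X 0 ^ 4 * X 5 ^ 4 *
        (killX 5 (a 0) * X 1 ^ 2 + killX 5 (a 1) * (X 2 ^ 2 - X 4)), by linear_combination ht 3⟩

/-- `(s, E)` is a regular sequence on `𝓡 = ℂ[s,A,B,C,D,E]/I_{sE}`:
the image of `s` is not a zero divisor in `𝓡`, and the image of `E` is not a
zero divisor in `𝓡/(s) = ℂ[s,A,B,C,D,E]/(I_{sE} + (s))`. -/
theorem stmt_15 :
    Ideal.Quotient.mk I_sE (X 0) ∈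
      nonZeroDivisors (MvPolynomial (Fin 6) ℂ ⧸ I_sE) ∧
    Ideal.Quotient.mk (I_sE ⊔ Ideal.span {X 0}) (X 5) ∈
      nonZeroDivisors
        (MvPolynomial (Fin 6) ℂ ⧸ (I_sE ⊔ Ideal.span {X 0})) :=
  ⟨X_zero_mem_nonZeroDivisors_quotient_I_sE, X_five_mem_nonZeroDivisors_quotient_I_sE_sup⟩
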